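/- Let (X₁, X₂) be a bivariate Gaussian vector with mean zero, variances σ₁², σ₂² and covariance C₁₂, and let g : ℝ² → ℝ be three times continuously differentiable with all derivatives up to order three of polynomial growth. Then E[g(X₁,X₂)·X₁·X₂²] = (σ₁²σ₂² + 2C₁₂²)·E[∂₁g] + 3σ₂²C₁₂·E[∂₂g] + (2σ₁²σ₂²C₁₂ + C₁₂³)·E[∂₁²∂₂ g] + (σ₁²σ₂⁴ + 2σ₂²C₁₂²)·E[∂₁∂₂² g] + σ₁²C₁₂²·E[∂₁³ g] + σ₂⁴C₁₂·E[∂₂³ g]. -/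

import Mathlib

/-!
Stein's identity for the bivariate Gaussian. Write `(A, B, C) = (σ₁², σ₂², C₁₂)`. The density
`φ` satisfies `∂₁φ = -φ · (B x - C y) / (A B - C²)`, so integrating `∂₁ (f φ)` over the plane
(in `x` first, then Fubini) gives `(A B - C²) E[∂₁f] = B E[f X₁] - C E[f X₂]`; swapping the
coordinates gives the companion identity for `∂₂`, and solving the 2 × 2 system gives
`E[f X₁] = A E[∂₁f] + C E[∂₂f]` and `E[f X₂] = C E[∂₁f] + B E[∂₂f]`.
Peeling the factors `X₁`, `X₂`, `X₂` off `g X₁ X₂²` one at a time with these identities and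
commuting mixed partials yields the formula. Polynomial growth of the derivatives of `g` keeps
every integrand integrable against the Gaussian tail.
-/

open MeasureTheory

/-- Density of the mean-zero bivariate normal distribution with variances `s1, s2`
and covariance `c` (here `s1 = σ₁²`, `s2 = σ₂²`). -/
noncomputable def gaussPdf2 (s1 s2 c : ℝ) (p : ℝ × ℝ) : ℝ :=
  (2 * Real.pi)⁻¹ * (s1 * s2 - c ^ 2) ^ (-(1 : ℝ) / 2) *
    Real.exp (-(1 / 2) * ((s2 * p.1 ^ 2 - 2 * c * p.1 * p.2 + s1 * p.2 ^ 2) /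
      (s1 * s2 - c ^ 2)))

/-- The mean-zero bivariate Gaussian measure. -/
noncomputable def gaussMeasure2 (s1 s2 c : ℝ) : Measure (ℝ × ℝ) :=
  volume.withDensity fun p => ENNReal.ofReal (gaussPdf2 s1 s2 c p)

/-- Partial derivative with respect to the first argument. -/
noncomputable def pd1 (g : ℝ × ℝ → ℝ) : ℝ × ℝ → ℝ :=
  fun p => deriv (fun t => g (t, p.2)) p.1

/-- Partial derivative with respect to the second argument. -/
noncomputable def pd2 (g : ℝ × ℝ → ℝ) : ℝ × ℝ → ℝ :=
  fun p => deriv (fun t => g (p.1, t)) p.2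

open Real Asymptotics

def PolyGrowth {E F : Type*} [Norm E] [Norm F] (f : E → F) : Prop :=
  ∃ n : ℕ, f =O[⊤] fun x => (1 + ‖x‖) ^ n

namespace PolyGrowth

variable {E F : Type*} [NormedAddCommGroup E] [NormedAddCommGroup F]

theorem of_norm_le_mul {f : E → F} {G : Type*} [Norm G] {g : E → G} {c : ℝ}
    (hf : PolyGrowth f) (h : ∀ x, ‖g x‖ ≤ c * ‖f x‖) : PolyGrowth g :=
  let ⟨n, hn⟩ := hf
  ⟨n, (isBigO_top.2 ⟨c, h⟩).trans hn⟩

theorem of_le_rpow {f : E → F} {c k : ℝ} (h : ∀ x, ‖f x‖ ≤ c * (1 + ‖x‖) ^ k) :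
    PolyGrowth f := by
  refine ⟨⌈k⌉₊, isBigO_top.2 ⟨|c|, fun x => ?_⟩⟩
  have hx : 1 ≤ 1 + ‖x‖ := le_add_of_nonneg_right (norm_nonneg x)
  calc ‖f x‖ ≤ c * (1 + ‖x‖) ^ k := h x
    _ ≤ |c| * (1 + ‖x‖) ^ (⌈k⌉₊ : ℝ) := by
      gcongr
      · exact le_abs_self c
      · exact Nat.le_ceil k
    _ = |c| * ‖(1 + ‖x‖) ^ ⌈k⌉₊‖ := by
      rw [rpow_natCast, norm_of_nonneg (by positivity)]

theorem one_add_norm_pow_isBigO {m n : ℕ} (h : m ≤ n) :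
    (fun x : E => (1 + ‖x‖) ^ m) =O[⊤] fun x => (1 + ‖x‖) ^ n :=
  isBigO_of_le ⊤ fun x => by
    rw [norm_of_nonneg (by positivity), norm_of_nonneg (by positivity)]
    exact pow_le_pow_right₀ (le_add_of_nonneg_right (norm_nonneg x)) h

theorem add {f g : E → F} (hf : PolyGrowth f) (hg : PolyGrowth g) :
    PolyGrowth fun x => f x + g x := by
  obtain ⟨m, hm⟩ := hf
  obtain ⟨n, hn⟩ := hg
  exact ⟨max m n, (hm.trans (one_add_norm_pow_isBigO (le_max_left m n))).add
    (hn.trans (one_add_norm_pow_isBigO (le_max_right m n)))⟩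

theorem const_mul {f : E → ℝ} (hf : PolyGrowth f) (c : ℝ) : PolyGrowth fun x => c * f x :=
  let ⟨n, hn⟩ := hf
  ⟨n, hn.const_mul_left c⟩

theorem mul {f g : E → ℝ} (hf : PolyGrowth f) (hg : PolyGrowth g) :
    PolyGrowth fun x => f x * g x := by
  obtain ⟨m, hm⟩ := hf
  obtain ⟨n, hn⟩ := hg
  exact ⟨m + n, by simpa only [pow_add] using hm.mul hn⟩

theorem pow {f : E → ℝ} (hf : PolyGrowth f) (k : ℕ) : PolyGrowth fun x => f x ^ k := by
  obtain ⟨n, hn⟩ := hf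
  exact ⟨n * k, by simpa only [pow_mul] using hn.pow k⟩

theorem comp_swap {f : E × E → F} (hf : PolyGrowth f) : PolyGrowth (f ∘ Prod.swap) := by
  obtain ⟨n, hn⟩ := hf
  refine ⟨n, (hn.comp_tendsto Filter.tendsto_top).congr_right fun p => ?_⟩
  simp only [Function.comp_apply, Prod.norm_def, Prod.fst_swap, Prod.snd_swap, max_comm]

end PolyGrowth

theorem polyGrowth_fst {E F : Type*} [NormedAddCommGroup E] [NormedAddCommGroup F] :
    PolyGrowth fun p : E × F => p.1 :=
  ⟨1, isBigO_of_le' (c := 1) ⊤ fun p => by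
    rw [pow_one, norm_of_nonneg (by positivity), one_mul]
    exact (norm_fst_le p).trans (le_add_of_nonneg_left zero_le_one)⟩

theorem polyGrowth_snd {E F : Type*} [NormedAddCommGroup E] [NormedAddCommGroup F] :
    PolyGrowth fun p : E × F => p.2 :=
  ⟨1, isBigO_of_le' (c := 1) ⊤ fun p => by
    rw [pow_one, norm_of_nonneg (by positivity), one_mul]
    exact (norm_snd_le p).trans (le_add_of_nonneg_left zero_le_one)⟩

def ContDiffPolyGrowth {E F : Type*} [NormedAddCommGroup E] [NormedSpace ℝ E]
    [NormedAddCommGroup F] [NormedSpace ℝ F] (k : ℕ) (f : E → F) : Prop :=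
  ContDiff ℝ k f ∧ ∀ i ≤ k, PolyGrowth (iteratedFDeriv ℝ i f)

namespace ContDiffPolyGrowth

variable {E F : Type*} [NormedAddCommGroup E] [NormedSpace ℝ E]
  [NormedAddCommGroup F] [NormedSpace ℝ F] {k : ℕ} {f : E → F}

theorem polyGrowth (hf : ContDiffPolyGrowth k f) : PolyGrowth f :=
  (hf.2 0 k.zero_le).of_norm_le_mul (c := 1) fun _ => by rw [norm_iteratedFDeriv_zero, one_mul]

theorem fderiv_apply (hf : ContDiffPolyGrowth (k + 1) f) (v : E) :
    ContDiffPolyGrowth k fun x => fderiv ℝ f x v := by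
  have hk : ((k : ℕ) : WithTop ℕ∞) + 1 ≤ ((k + 1 : ℕ) : WithTop ℕ∞) := by norm_cast
  refine ⟨(hf.1.fderiv_right hk).clm_apply contDiff_const, fun i hi => ?_⟩
  refine (hf.2 (i + 1) (by omega)).of_norm_le_mul (c := ‖v‖) fun x => ?_
  rw [← norm_iteratedFDeriv_fderiv]
  exact norm_iteratedFDeriv_clm_apply_const
    ((hf.1.fderiv_right hk).contDiffAt.of_le (by exact_mod_cast hi)) le_rfl

end ContDiffPolyGrowth

section PartialDerivatives

variable {f : ℝ × ℝ → ℝ}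

theorem hasDerivAt_fderiv_apply_fst {x y : ℝ} (hf : DifferentiableAt ℝ f (x, y)) :
    HasDerivAt (fun t => f (t, y)) (fderiv ℝ f (x, y) (1, 0)) x :=
  hf.hasFDerivAt.comp_hasDerivAt x ((hasDerivAt_id x).prodMk (hasDerivAt_const x y))

theorem hasDerivAt_fderiv_apply_snd {x y : ℝ} (hf : DifferentiableAt ℝ f (x, y)) :
    HasDerivAt (fun t => f (x, t)) (fderiv ℝ f (x, y) (0, 1)) y :=
  hf.hasFDerivAt.comp_hasDerivAt y ((hasDerivAt_const y x).prodMk (hasDerivAt_id y))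

theorem pd1_eq_fderiv (hf : Differentiable ℝ f) : pd1 f = fun p => fderiv ℝ f p (1, 0) :=
  funext fun p => (hasDerivAt_fderiv_apply_fst (hf p)).deriv

theorem pd2_eq_fderiv (hf : Differentiable ℝ f) : pd2 f = fun p => fderiv ℝ f p (0, 1) :=
  funext fun p => (hasDerivAt_fderiv_apply_snd (hf p)).deriv

theorem hasDerivAt_pd1 (hf : Differentiable ℝ f) (x y : ℝ) :
    HasDerivAt (fun t => f (t, y)) (pd1 f (x, y)) x := by
  rw [pd1_eq_fderiv hf]
  exact hasDerivAt_fderiv_apply_fst (hf (x, y))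

theorem hasDerivAt_pd2 (hf : Differentiable ℝ f) (x y : ℝ) :
    HasDerivAt (fun t => f (x, t)) (pd2 f (x, y)) y := by
  rw [pd2_eq_fderiv hf]
  exact hasDerivAt_fderiv_apply_snd (hf (x, y))

theorem ContDiff.continuous_pd1 (hf : ContDiff ℝ 1 f) : Continuous (pd1 f) := by
  rw [pd1_eq_fderiv (hf.differentiable one_ne_zero)]
  exact (hf.continuous_fderiv one_ne_zero).clm_apply continuous_const

theorem ContDiffPolyGrowth.contDiff_one {k : ℕ} (hf : ContDiffPolyGrowth (k + 1) f) :
    ContDiff ℝ 1 f :=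
  hf.1.of_le (by exact_mod_cast Nat.le_add_left 1 k)

theorem ContDiffPolyGrowth.pd1 {k : ℕ} (hf : ContDiffPolyGrowth (k + 1) f) :
    ContDiffPolyGrowth k (pd1 f) := by
  rw [pd1_eq_fderiv (hf.1.differentiable (by simp))]
  exact hf.fderiv_apply _

theorem ContDiffPolyGrowth.pd2 {k : ℕ} (hf : ContDiffPolyGrowth (k + 1) f) :
    ContDiffPolyGrowth k (pd2 f) := by
  rw [pd2_eq_fderiv (hf.1.differentiable (by simp))]
  exact hf.fderiv_apply _

theorem pd1_pd2_comm (hf : ContDiff ℝ 2 f) : pd1 (pd2 f) = pd2 (pd1 f) := by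
  have hd : Differentiable ℝ f := hf.differentiable two_ne_zero
  have hd2 : Differentiable ℝ (fderiv ℝ f) :=
    (hf.fderiv_right (m := 1) le_rfl).differentiable one_ne_zero
  rw [pd2_eq_fderiv hd, pd1_eq_fderiv hd, pd1_eq_fderiv (hd2.clm_apply (differentiable_const _)),
    pd2_eq_fderiv (hd2.clm_apply (differentiable_const _))]
  funext p
  have hsymm : IsSymmSndFDerivAt ℝ f p :=
    hf.contDiffAt.isSymmSndFDerivAt (by simp [minSmoothness_of_isRCLikeNormedField])
  rw [fderiv_clm_apply (hd2 p) (differentiableAt_const _),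
    fderiv_clm_apply (hd2 p) (differentiableAt_const _)]
  simp [hsymm (1, 0) (0, 1)]

theorem pd1_mul_snd (hf : Differentiable ℝ f) :
    pd1 (fun p => f p * p.2) = fun p => pd1 f p * p.2 :=
  funext fun p => ((hasDerivAt_pd1 hf p.1 p.2).mul_const p.2).deriv

theorem pd1_mul_snd_sq (hf : Differentiable ℝ f) :
    pd1 (fun p => f p * p.2 ^ 2) = fun p => pd1 f p * p.2 ^ 2 :=
  funext fun p => ((hasDerivAt_pd1 hf p.1 p.2).mul_const (p.2 ^ 2)).deriv

theorem pd2_mul_snd (hf : Differentiable ℝ f) :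
    pd2 (fun p => f p * p.2) = fun p => pd2 f p * p.2 + f p :=
  funext fun p => by
    have h : HasDerivAt (fun t => f (p.1, t) * t) (pd2 f p * p.2 + f p) p.2 :=
      ((hasDerivAt_pd2 hf p.1 p.2).mul (hasDerivAt_id' p.2)).congr_deriv (by ring)
    exact h.deriv

theorem pd2_mul_snd_sq (hf : Differentiable ℝ f) :
    pd2 (fun p => f p * p.2 ^ 2) = fun p => pd2 f p * p.2 ^ 2 + 2 * (f p * p.2) :=
  funext fun p => by
    have h : HasDerivAt (fun t => f (p.1, t) * t ^ 2)
        (pd2 f p * p.2 ^ 2 + 2 * (f p * p.2)) p.2 :=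
      ((hasDerivAt_pd2 hf p.1 p.2).mul (hasDerivAt_pow 2 p.2)).congr_deriv (by ring)
    exact h.deriv

end PartialDerivatives

theorem integrable_one_add_abs_pow_mul_exp_neg_mul_sq {b : ℝ} (hb : 0 < b) (n : ℕ) :
    Integrable fun t : ℝ => (1 + |t|) ^ n * exp (-b * t ^ 2) := by
  refine ((integrable_exp_neg_mul_sq (half_pos hb)).const_mul (exp (n ^ 2 / (2 * b)))).mono'
    (by fun_prop) (.of_forall fun t => ?_)
  have hpow : (1 + |t|) ^ n ≤ exp (n * |t|) := by
    rw [exp_nat_mul]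
    gcongr
    linarith [add_one_le_exp |t|]
  have hamgm : n * |t| ≤ n ^ 2 / (2 * b) + b / 2 * t ^ 2 := by
    rw [div_add' _ _ _ (by positivity), le_div_iff₀ (by positivity), ← sq_abs t]
    nlinarith [sq_nonneg (b * |t| - n)]
  rw [norm_of_nonneg (by positivity)]
  calc (1 + |t|) ^ n * exp (-b * t ^ 2)
      ≤ exp (n ^ 2 / (2 * b) + b / 2 * t ^ 2) * exp (-b * t ^ 2) := by
        gcongr
        exact hpow.trans (exp_le_exp.2 hamgm)
    _ = exp (n ^ 2 / (2 * b)) * exp (-(b / 2) * t ^ 2) := by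
        rw [← exp_add, ← exp_add]
        ring_nf

theorem one_add_norm_le_mul_one_add_abs (p : ℝ × ℝ) :
    1 + ‖p‖ ≤ (1 + |p.1|) * (1 + |p.2|) := by
  have : ‖p‖ ≤ |p.1| + |p.2| :=
    max_le (le_add_of_nonneg_right (abs_nonneg _)) (le_add_of_nonneg_left (abs_nonneg _))
  nlinarith [abs_nonneg p.1, abs_nonneg p.2]

section GaussianDensity

variable {A B C : ℝ}

theorem gaussPdf2_pos (hD : 0 < A * B - C ^ 2) (p : ℝ × ℝ) : 0 < gaussPdf2 A B C p :=
  mul_pos (mul_pos (by positivity) (rpow_pos_of_pos hD _)) (exp_pos _)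

theorem differentiable_gaussPdf2 : Differentiable ℝ (gaussPdf2 A B C) := by
  unfold gaussPdf2
  fun_prop

theorem gaussPdf2_swap (p : ℝ × ℝ) : gaussPdf2 A B C p.swap = gaussPdf2 B A C p := by
  simp only [gaussPdf2, Prod.fst_swap, Prod.snd_swap]
  ring_nf

theorem hasDerivAt_gaussPdf2_fst (x y : ℝ) :
    HasDerivAt (fun t => gaussPdf2 A B C (t, y))
      (-((B * x - C * y) / (A * B - C ^ 2) * gaussPdf2 A B C (x, y))) x := by
  have hquad : HasDerivAt (fun t => B * t ^ 2 - 2 * C * t * y + A * y ^ 2)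
      (B * (2 * x) - 2 * C * y) x := by
    simpa using (((hasDerivAt_pow 2 x).const_mul B).sub
      (((hasDerivAt_id x).const_mul (2 * C)).mul_const y)).add_const (A * y ^ 2)
  have h := (((hquad.div_const (A * B - C ^ 2)).const_mul (-(1 / 2))).exp).const_mul
    ((2 * π)⁻¹ * (A * B - C ^ 2) ^ (-(1 : ℝ) / 2))
  unfold gaussPdf2
  exact h.congr_deriv (by ring)

theorem pd1_gaussPdf2 :
    pd1 (gaussPdf2 A B C) =
      fun p => -((B * p.1 - C * p.2) / (A * B - C ^ 2) * gaussPdf2 A B C p) :=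
  funext fun p => (hasDerivAt_gaussPdf2_fst p.1 p.2).deriv

theorem gaussPdf2_le (hA : 0 < A) (hD : 0 < A * B - C ^ 2) (p : ℝ × ℝ) :
    gaussPdf2 A B C p ≤ (2 * π)⁻¹ * (A * B - C ^ 2) ^ (-(1 : ℝ) / 2) *
      (exp (-(2 * (A + B))⁻¹ * p.1 ^ 2) * exp (-(2 * (A + B))⁻¹ * p.2 ^ 2)) := by
  have hAB : 0 < A + B := by nlinarith [sq_nonneg C]
  -- `(A + B) Q - D (x² + y²) = (B x - C y)² + (A y - C x)²`
  have hQ : (p.1 ^ 2 + p.2 ^ 2) / (A + B) ≤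
      (B * p.1 ^ 2 - 2 * C * p.1 * p.2 + A * p.2 ^ 2) / (A * B - C ^ 2) := by
    rw [div_le_div_iff₀ hAB hD]
    nlinarith [sq_nonneg (B * p.1 - C * p.2), sq_nonneg (A * p.2 - C * p.1)]
  rw [gaussPdf2, ← exp_add]
  gcongr
  linarith [show -(2 * (A + B))⁻¹ * p.1 ^ 2 + -(2 * (A + B))⁻¹ * p.2 ^ 2 =
    -(1 / 2) * ((p.1 ^ 2 + p.2 ^ 2) / (A + B)) by field_simp; ring]

theorem PolyGrowth.integrable_mul_gaussPdf2 (hA : 0 < A) (hD : 0 < A * B - C ^ 2)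
    {f : ℝ × ℝ → ℝ} (hf : PolyGrowth f) (hfc : Continuous f) :
    Integrable fun p => f p * gaussPdf2 A B C p := by
  obtain ⟨n, hn⟩ := hf
  obtain ⟨c, hc⟩ := isBigO_top.1 hn
  have hc0 : 0 ≤ c := by simpa using (norm_nonneg _).trans (hc 0)
  have hb : 0 < (2 * (A + B))⁻¹ := inv_pos.2 (by nlinarith [sq_nonneg C])
  have hw := integrable_one_add_abs_pow_mul_exp_neg_mul_sq hb n
  rw [Measure.volume_eq_prod]
  refine ((hw.mul_prod hw).const_mul
    (c * ((2 * π)⁻¹ * (A * B - C ^ 2) ^ (-(1 : ℝ) / 2)))).mono'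
    (hfc.mul differentiable_gaussPdf2.continuous).aestronglyMeasurable (.of_forall fun p => ?_)
  have hfp : ‖f p‖ ≤ c * (1 + ‖p‖) ^ n := by
    simpa [norm_of_nonneg (by positivity : (0 : ℝ) ≤ (1 + ‖p‖) ^ n)] using hc p
  rw [norm_mul, norm_of_nonneg (gaussPdf2_pos hD p).le]
  calc ‖f p‖ * gaussPdf2 A B C p
      ≤ c * ((1 + |p.1|) * (1 + |p.2|)) ^ n *
          ((2 * π)⁻¹ * (A * B - C ^ 2) ^ (-(1 : ℝ) / 2) *
            (exp (-(2 * (A + B))⁻¹ * p.1 ^ 2) * exp (-(2 * (A + B))⁻¹ * p.2 ^ 2))) := by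
        refine mul_le_mul (hfp.trans ?_) (gaussPdf2_le hA hD p) (gaussPdf2_pos hD p).le
          (by positivity)
        gcongr
        exact one_add_norm_le_mul_one_add_abs p
    _ = _ := by rw [mul_pow]; ring

theorem integral_gaussMeasure2 (hD : 0 < A * B - C ^ 2) (h : ℝ × ℝ → ℝ) :
    ∫ p, h p ∂gaussMeasure2 A B C = ∫ p, h p * gaussPdf2 A B C p := by
  rw [gaussMeasure2, integral_withDensity_eq_integral_toReal_smul
    differentiable_gaussPdf2.continuous.measurable.ennreal_ofReal
    (.of_forall fun _ => ENNReal.ofReal_lt_top)]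
  simp_rw [ENNReal.toReal_ofReal (gaussPdf2_pos hD _).le, smul_eq_mul, mul_comm]

theorem integrable_gaussMeasure2_iff (hD : 0 < A * B - C ^ 2) {h : ℝ × ℝ → ℝ} :
    Integrable h (gaussMeasure2 A B C) ↔ Integrable fun p => h p * gaussPdf2 A B C p := by
  rw [gaussMeasure2, integrable_withDensity_iff_integrable_smul'
    differentiable_gaussPdf2.continuous.measurable.ennreal_ofReal
    (.of_forall fun _ => ENNReal.ofReal_lt_top)]
  simp_rw [ENNReal.toReal_ofReal (gaussPdf2_pos hD _).le, smul_eq_mul, mul_comm]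

theorem PolyGrowth.integrable_gaussMeasure2 (hA : 0 < A) (hD : 0 < A * B - C ^ 2)
    {f : ℝ × ℝ → ℝ} (hf : PolyGrowth f) (hfc : Continuous f) :
    Integrable f (gaussMeasure2 A B C) :=
  (integrable_gaussMeasure2_iff hD).2 (hf.integrable_mul_gaussPdf2 hA hD hfc)

theorem integral_gaussMeasure2_comp_swap (hD : 0 < A * B - C ^ 2) (h : ℝ × ℝ → ℝ) :
    ∫ p, h p.swap ∂gaussMeasure2 B A C = ∫ p, h p ∂gaussMeasure2 A B C := by
  rw [integral_gaussMeasure2 (by linarith [mul_comm A B]), integral_gaussMeasure2 hD]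
  simp only [← gaussPdf2_swap (A := A) (B := B) (C := C)]
  rw [Measure.volume_eq_prod]
  exact integral_prod_swap fun p => h p * gaussPdf2 A B C p

end GaussianDensity

theorem integral_pd1_mul_eq_neg_integral_mul_pd1 {f φ : ℝ × ℝ → ℝ}
    (hf : Differentiable ℝ f) (hφ : Differentiable ℝ φ)
    (hf'φ : Integrable fun p => pd1 f p * φ p)
    (hfφ' : Integrable fun p => f p * pd1 φ p) (hfφ : Integrable fun p => f p * φ p) :
    ∫ p, pd1 f p * φ p = -∫ p, f p * pd1 φ p := by
  rw [Measure.volume_eq_prod] at hf'φ hfφ' hfφ ⊢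
  rw [integral_prod_symm _ hf'φ, integral_prod_symm _ hfφ', ← integral_neg]
  refine integral_congr_ae ?_
  filter_upwards [hf'φ.prod_left_ae, hfφ'.prod_left_ae, hfφ.prod_left_ae] with y h1 h2 h3
  exact neg_eq_iff_eq_neg.1 (integral_mul_deriv_eq_deriv_mul_of_integrable
    (fun x _ => hasDerivAt_pd1 hf x y) (fun x _ => hasDerivAt_pd1 hφ x y) h2 h1 h3).symm

section SteinIdentities

variable {A B C : ℝ} {f : ℝ × ℝ → ℝ}

theorem integral_pd1_gaussMeasure2 (hA : 0 < A) (hD : 0 < A * B - C ^ 2)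
    (hf : ContDiff ℝ 1 f) (h0 : PolyGrowth f) (h1 : PolyGrowth (pd1 f)) :
    (A * B - C ^ 2) * ∫ p, pd1 f p ∂gaussMeasure2 A B C =
      B * ∫ p, f p * p.1 ∂gaussMeasure2 A B C
        - C * ∫ p, f p * p.2 ∂gaussMeasure2 A B C := by
  have hfst : Integrable fun p => f p * p.1 * gaussPdf2 A B C p :=
    (h0.mul polyGrowth_fst).integrable_mul_gaussPdf2 hA hD (hf.continuous.mul continuous_fst)
  have hsnd : Integrable fun p => f p * p.2 * gaussPdf2 A B C p :=
    (h0.mul polyGrowth_snd).integrable_mul_gaussPdf2 hA hD (hf.continuous.mul continuous_snd)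
  have hfφ' : (fun p => f p * pd1 (gaussPdf2 A B C) p) = fun p =>
      C / (A * B - C ^ 2) * (f p * p.2 * gaussPdf2 A B C p) -
        B / (A * B - C ^ 2) * (f p * p.1 * gaussPdf2 A B C p) := by
    rw [pd1_gaussPdf2]
    ext p
    ring
  have hibp := integral_pd1_mul_eq_neg_integral_mul_pd1 (hf.differentiable one_ne_zero)
    differentiable_gaussPdf2 (h1.integrable_mul_gaussPdf2 hA hD hf.continuous_pd1)
    (hfφ' ▸ (hsnd.const_mul _).sub (hfst.const_mul _))
    (h0.integrable_mul_gaussPdf2 hA hD hf.continuous)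
  simp only [integral_gaussMeasure2 hD]
  rw [hibp, hfφ', integral_sub (hsnd.const_mul _) (hfst.const_mul _), integral_const_mul,
    integral_const_mul]
  field_simp
  ring

theorem integral_pd2_gaussMeasure2 (hA : 0 < A) (hD : 0 < A * B - C ^ 2)
    (hf : ContDiff ℝ 1 f) (h0 : PolyGrowth f) (h2 : PolyGrowth (pd2 f)) :
    (A * B - C ^ 2) * ∫ p, pd2 f p ∂gaussMeasure2 A B C =
      A * ∫ p, f p * p.2 ∂gaussMeasure2 A B C
        - C * ∫ p, f p * p.1 ∂gaussMeasure2 A B C := by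
  have hB : 0 < B := by nlinarith [sq_nonneg C]
  have h := integral_pd1_gaussMeasure2 (A := B) (B := A) (C := C) (f := f ∘ Prod.swap) hB
    (by linarith [mul_comm A B]) (hf.comp (contDiff_snd.prodMk contDiff_fst))
    h0.comp_swap h2.comp_swap
  have e1 : ∫ p, pd1 (f ∘ Prod.swap) p ∂gaussMeasure2 B A C =
      ∫ p, pd2 f p ∂gaussMeasure2 A B C :=
    integral_gaussMeasure2_comp_swap hD (pd2 f)
  have e2 : ∫ p, (f ∘ Prod.swap) p * p.1 ∂gaussMeasure2 B A C =
      ∫ p, f p * p.2 ∂gaussMeasure2 A B C :=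
    integral_gaussMeasure2_comp_swap hD fun p => f p * p.2
  have e3 : ∫ p, (f ∘ Prod.swap) p * p.2 ∂gaussMeasure2 B A C =
      ∫ p, f p * p.1 ∂gaussMeasure2 A B C :=
    integral_gaussMeasure2_comp_swap hD fun p => f p * p.1
  rw [e1, e2, e3, mul_comm B A] at h
  exact h

theorem integral_mul_fst_gaussMeasure2 (hA : 0 < A) (hD : 0 < A * B - C ^ 2)
    (hf : ContDiff ℝ 1 f) (h0 : PolyGrowth f) (h1 : PolyGrowth (pd1 f))
    (h2 : PolyGrowth (pd2 f)) :
    ∫ p, f p * p.1 ∂gaussMeasure2 A B C =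
      A * ∫ p, pd1 f p ∂gaussMeasure2 A B C + C * ∫ p, pd2 f p ∂gaussMeasure2 A B C := by
  have e1 := integral_pd1_gaussMeasure2 hA hD hf h0 h1
  have e2 := integral_pd2_gaussMeasure2 hA hD hf h0 h2
  refine mul_left_cancel₀ hD.ne' ?_
  linear_combination -A * e1 - C * e2

theorem integral_mul_snd_gaussMeasure2 (hA : 0 < A) (hD : 0 < A * B - C ^ 2)
    (hf : ContDiff ℝ 1 f) (h0 : PolyGrowth f) (h1 : PolyGrowth (pd1 f))
    (h2 : PolyGrowth (pd2 f)) :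
    ∫ p, f p * p.2 ∂gaussMeasure2 A B C =
      C * ∫ p, pd1 f p ∂gaussMeasure2 A B C + B * ∫ p, pd2 f p ∂gaussMeasure2 A B C := by
  have e1 := integral_pd1_gaussMeasure2 hA hD hf h0 h1
  have e2 := integral_pd2_gaussMeasure2 hA hD hf h0 h2
  refine mul_left_cancel₀ hD.ne' ?_
  linear_combination -C * e1 - B * e2

theorem integral_mul_snd_sq_gaussMeasure2 (hA : 0 < A) (hD : 0 < A * B - C ^ 2)
    (hf : ContDiffPolyGrowth 2 f) :
    ∫ p, f p * p.2 ^ 2 ∂gaussMeasure2 A B C =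
      B * ∫ p, f p ∂gaussMeasure2 A B C + C ^ 2 * ∫ p, pd1 (pd1 f) p ∂gaussMeasure2 A B C
        + 2 * B * C * ∫ p, pd1 (pd2 f) p ∂gaussMeasure2 A B C
        + B ^ 2 * ∫ p, pd2 (pd2 f) p ∂gaussMeasure2 A B C := by
  have hd : Differentiable ℝ f := hf.contDiff_one.differentiable one_ne_zero
  have h1 := hf.pd1
  have h2 := hf.pd2
  have e1 := integral_mul_snd_gaussMeasure2 hA hD (f := fun p => f p * p.2)
    (hf.contDiff_one.mul contDiff_snd) (hf.polyGrowth.mul polyGrowth_snd)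
    (by rw [pd1_mul_snd hd]; exact h1.polyGrowth.mul polyGrowth_snd)
    (by rw [pd2_mul_snd hd]; exact (h2.polyGrowth.mul polyGrowth_snd).add hf.polyGrowth)
  have e2 := integral_mul_snd_gaussMeasure2 hA hD h1.contDiff_one h1.polyGrowth
    h1.pd1.polyGrowth h1.pd2.polyGrowth
  have e3 := integral_mul_snd_gaussMeasure2 hA hD h2.contDiff_one h2.polyGrowth
    h2.pd1.polyGrowth h2.pd2.polyGrowth
  rw [pd1_mul_snd hd, pd2_mul_snd hd, integral_add
    ((h2.polyGrowth.mul polyGrowth_snd).integrable_gaussMeasure2 hA hD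
      (h2.1.continuous.mul continuous_snd))
    (hf.polyGrowth.integrable_gaussMeasure2 hA hD hf.1.continuous)] at e1
  rw [← pd1_pd2_comm (by exact_mod_cast hf.1)] at e2
  have hsq : (fun p : ℝ × ℝ => f p * p.2 ^ 2) = fun p => f p * p.2 * p.2 := by ext; ring
  rw [hsq, e1]
  linear_combination C * e2 + B * e3

theorem integral_mul_fst_mul_snd_sq_gaussMeasure2 (hA : 0 < A) (hD : 0 < A * B - C ^ 2)
    {k : ℕ} (hf : ContDiffPolyGrowth (k + 1) f) :
    ∫ p, f p * p.1 * p.2 ^ 2 ∂gaussMeasure2 A B C =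
      A * ∫ p, pd1 f p * p.2 ^ 2 ∂gaussMeasure2 A B C
        + C * ∫ p, pd2 f p * p.2 ^ 2 ∂gaussMeasure2 A B C
        + 2 * C * ∫ p, f p * p.2 ∂gaussMeasure2 A B C := by
  have hd : Differentiable ℝ f := hf.contDiff_one.differentiable one_ne_zero
  have h2 := hf.pd2.polyGrowth.mul (polyGrowth_snd.pow 2)
  have h0 := hf.polyGrowth.mul polyGrowth_snd
  have e := integral_mul_fst_gaussMeasure2 hA hD (f := fun p => f p * p.2 ^ 2)
    (hf.contDiff_one.mul (contDiff_snd.pow 2)) (hf.polyGrowth.mul (polyGrowth_snd.pow 2))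
    (by rw [pd1_mul_snd_sq hd]; exact hf.pd1.polyGrowth.mul (polyGrowth_snd.pow 2))
    (by rw [pd2_mul_snd_sq hd]; exact h2.add (h0.const_mul 2))
  rw [pd1_mul_snd_sq hd, pd2_mul_snd_sq hd, integral_add
    (h2.integrable_gaussMeasure2 hA hD (hf.pd2.1.continuous.mul (continuous_snd.pow 2)))
    ((h0.integrable_gaussMeasure2 hA hD (hf.1.continuous.mul continuous_snd)).const_mul 2),
    integral_const_mul] at e
  have hperm : (fun p : ℝ × ℝ => f p * p.1 * p.2 ^ 2) = fun p => f p * p.2 ^ 2 * p.1 := by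
    ext; ring
  rw [hperm, e]
  ring

end SteinIdentities

theorem stein_example_bivariate_general (σ₁ σ₂ C₁₂ : ℝ)
    (hdet : 0 < σ₁ ^ 2 * σ₂ ^ 2 - C₁₂ ^ 2) (g : ℝ × ℝ → ℝ) (hg : ContDiff ℝ 3 g)
    (hgrowth : ∀ i ≤ 3, ∃ c k : ℝ, ∀ p, ‖iteratedFDeriv ℝ i g p‖ ≤ c * (1 + ‖p‖) ^ k) :
    ∫ p, g p * p.1 * p.2 ^ 2 ∂(gaussMeasure2 (σ₁ ^ 2) (σ₂ ^ 2) C₁₂) =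
      (σ₁ ^ 2 * σ₂ ^ 2 + 2 * C₁₂ ^ 2) * ∫ p, pd1 g p ∂(gaussMeasure2 (σ₁ ^ 2) (σ₂ ^ 2) C₁₂)
      + 3 * σ₂ ^ 2 * C₁₂ * ∫ p, pd2 g p ∂(gaussMeasure2 (σ₁ ^ 2) (σ₂ ^ 2) C₁₂)
      + (2 * σ₁ ^ 2 * σ₂ ^ 2 * C₁₂ + C₁₂ ^ 3) *
          ∫ p, pd1 (pd1 (pd2 g)) p ∂(gaussMeasure2 (σ₁ ^ 2) (σ₂ ^ 2) C₁₂)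
      + (σ₁ ^ 2 * σ₂ ^ 4 + 2 * σ₂ ^ 2 * C₁₂ ^ 2) *
          ∫ p, pd1 (pd2 (pd2 g)) p ∂(gaussMeasure2 (σ₁ ^ 2) (σ₂ ^ 2) C₁₂)
      + σ₁ ^ 2 * C₁₂ ^ 2 * ∫ p, pd1 (pd1 (pd1 g)) p ∂(gaussMeasure2 (σ₁ ^ 2) (σ₂ ^ 2) C₁₂)
      + σ₂ ^ 4 * C₁₂ * ∫ p, pd2 (pd2 (pd2 g)) p ∂(gaussMeasure2 (σ₁ ^ 2) (σ₂ ^ 2) C₁₂) := by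
  have hA : 0 < σ₁ ^ 2 := by nlinarith [sq_nonneg σ₁, sq_nonneg σ₂, sq_nonneg C₁₂]
  have hg3 : ContDiffPolyGrowth 3 g := ⟨hg, fun i hi => by
    obtain ⟨c, k, h⟩ := hgrowth i hi
    exact .of_le_rpow h⟩
  have h1 := hg3.pd1
  have h2 := hg3.pd2
  have e1 := integral_mul_fst_mul_snd_sq_gaussMeasure2 hA hdet hg3
  have e2 := integral_mul_snd_sq_gaussMeasure2 hA hdet h1
  have e3 := integral_mul_snd_sq_gaussMeasure2 hA hdet h2
  have e4 := integral_mul_snd_gaussMeasure2 hA hdet hg3.contDiff_one hg3.polyGrowth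
    h1.polyGrowth h2.polyGrowth
  rw [← pd1_pd2_comm (hg.of_le (by norm_num)), ← pd1_pd2_comm (by exact_mod_cast h2.1)] at e2
  rw [e1]
  linear_combination σ₁ ^ 2 * e2 + C₁₂ * e3 + 2 * C₁₂ * e4

theorem stein_example_bivariate (σ₁ σ₂ C₁₂ : ℝ) (hσ₁ : 0 < σ₁) (hσ₂ : 0 < σ₂)
    (hdet : 0 < σ₁ ^ 2 * σ₂ ^ 2 - C₁₂ ^ 2) (g : ℝ × ℝ → ℝ) (hg : ContDiff ℝ 3 g)
    (hgrowth : ∀ i ≤ 3, ∃ c k : ℝ, ∀ p, ‖iteratedFDeriv ℝ i g p‖ ≤ c * (1 + ‖p‖) ^ k) :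
    ∫ p, g p * p.1 * p.2 ^ 2 ∂(gaussMeasure2 (σ₁ ^ 2) (σ₂ ^ 2) C₁₂) =
      (σ₁ ^ 2 * σ₂ ^ 2 + 2 * C₁₂ ^ 2) * ∫ p, pd1 g p ∂(gaussMeasure2 (σ₁ ^ 2) (σ₂ ^ 2) C₁₂)
      + 3 * σ₂ ^ 2 * C₁₂ * ∫ p, pd2 g p ∂(gaussMeasure2 (σ₁ ^ 2) (σ₂ ^ 2) C₁₂)
      + (2 * σ₁ ^ 2 * σ₂ ^ 2 * C₁₂ + C₁₂ ^ 3) *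
          ∫ p, pd1 (pd1 (pd2 g)) p ∂(gaussMeasure2 (σ₁ ^ 2) (σ₂ ^ 2) C₁₂)
      + (σ₁ ^ 2 * σ₂ ^ 4 + 2 * σ₂ ^ 2 * C₁₂ ^ 2) *
          ∫ p, pd1 (pd2 (pd2 g)) p ∂(gaussMeasure2 (σ₁ ^ 2) (σ₂ ^ 2) C₁₂)
      + σ₁ ^ 2 * C₁₂ ^ 2 * ∫ p, pd1 (pd1 (pd1 g)) p ∂(gaussMeasure2 (σ₁ ^ 2) (σ₂ ^ 2) C₁₂)
      + σ₂ ^ 4 * C₁₂ * ∫ p, pd2 (pd2 (pd2 g)) p ∂(gaussMeasure2 (σ₁ ^ 2) (σ₂ ^ 2) C₁₂) :=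
  stein_example_bivariate_general σ₁ σ₂ C₁₂ hdet g hg hgrowth
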